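/- Let K be a primitive quartic CM field with real quadratic subfield K₀ of discriminant Δ₀, and let δ ∈ K₀ satisfy δ² = Δ₀. Let b be a fractional O_{K₀}-ideal with ℤ-basis b₁, b₂ satisfying b₁b₂ᶜ − b₂b₁ᶜ = N(b)·δ, where c is the nontrivial automorphism of K₀ and N(b) is the absolute norm of b. Let z ∈ K with z ∉ K₀ be such that z·b + b⁻¹ is a fractional O_K-ideal, and let φ₁, φ₂ be the two embeddings K → ℂ with Im φ(zδ⁻¹) > 0 (there are exactly two such embeddings, one from each complex-conjugate pair). Let Z be the symmetric 2×2 complex matrix with entries Z_{jk} = φ₁(zδ⁻¹b_j b_k) + φ₂(zδ⁻¹b_j b_k) for j, k ∈ {1,2}, and let Y = Im Z. Then Y is positive definite, det Y = I(z)·N(b)², and (2/√Δ₀)·N(b)·I(z)^{1/2} ≤ m₁(Y) ≤ m₂(Y) ≤ (2√Δ₀/3)·N(b)·I(z)^{1/2}. -/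

import Mathlib

/-!
Put `w = z δ⁻¹`, `yᵢ = Im φᵢ(w) > 0` and `σᵢ = φᵢ|K₀`. The `σᵢ` are real and distinct, so
`σ₂ = σ₁ ∘ c`, and the four embeddings of `K` are `φ₁, φ₂, φ̄₁, φ̄₂`. Hence
`Y = Bᵀ diag(y₁, y₂) B` with `B = (σᵢ(b_j))`, where `det B = σ₁(b₁b₂ᶜ − b₂b₁ᶜ) = N(b) σ₁(δ)`;
so `Y` is positive definite, `det Y = y₁y₂Δ₀ N(b)²`, and `I(z) = y₁y₂Δ₀` since
`φᵢ((z − z̄)/2) = i Im φᵢ(z)`. For `β = p₁b₁ + p₂b₂ ∈ b`, AM–GM gives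
`pᵀYp = y₁σ₁(β)² + y₂σ₂(β)² ≥ 2√(y₁y₂) |N(β)| ≥ 2√(y₁y₂) N(b)`, the lower bound on `m₁`.
The upper bound on `m₂` is Hermite's inequality `m₁ m₂ ≤ (4/3) det Y` for binary forms.
-/

open NumberField nonZeroDivisors Matrix

/-- The integral quadratic form attached to a real 2×2 matrix `Y`: `p ↦ pᵀ Y p`
for integer vectors `p ∈ ℤ²`. -/
noncomputable def quadForm (Y : Matrix (Fin 2) (Fin 2) ℝ) (p : Fin 2 → ℤ) : ℝ :=
  (fun i => (p i : ℝ)) ⬝ᵥ Y.mulVec (fun i => (p i : ℝ))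

/-- The first consecutive minimum `m₁(Y)`. -/
noncomputable def m1 (Y : Matrix (Fin 2) (Fin 2) ℝ) : ℝ :=
  sInf {r : ℝ | ∃ p : Fin 2 → ℤ, p ≠ 0 ∧ quadForm Y p = r}

/-- The second consecutive minimum `m₂(Y)`: the infimum of `qᵀYq` over integer vectors `q`
linearly independent of a vector `p` attaining `m₁(Y)`. -/
noncomputable def m2 (Y : Matrix (Fin 2) (Fin 2) ℝ) : ℝ :=
  sInf {r : ℝ | ∃ p q : Fin 2 → ℤ, p ≠ 0 ∧ quadForm Y p = m1 Y ∧
    LinearIndependent ℤ ![p, q] ∧ quadForm Y q = r}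

section BinaryQuadraticForm

variable {Y : Matrix (Fin 2) (Fin 2) ℝ}

lemma quadForm_apply (Y : Matrix (Fin 2) (Fin 2) ℝ) (p : Fin 2 → ℤ) :
    quadForm Y p = Y 0 0 * p 0 ^ 2 + (Y 0 1 + Y 1 0) * (p 0 * p 1) + Y 1 1 * p 1 ^ 2 := by
  simp only [quadForm, dotProduct, mulVec, Fin.sum_univ_two]
  ring

lemma quadForm_smul (Y : Matrix (Fin 2) (Fin 2) ℝ) (g : ℤ) (p : Fin 2 → ℤ) :
    quadForm Y (g • p) = g ^ 2 * quadForm Y p := by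
  simp only [quadForm_apply, Pi.smul_apply, smul_eq_mul, Int.cast_mul]
  ring

lemma quadForm_pos (hY : Y.PosDef) {p : Fin 2 → ℤ} (hp : p ≠ 0) : 0 < quadForm Y p := by
  have hv : (fun i => (p i : ℝ)) ≠ 0 := fun h =>
    hp (funext fun i => by simpa using congrFun h i)
  exact hY.dotProduct_mulVec_pos hv

lemma quadForm_nonneg (hY : Y.PosDef) (p : Fin 2 → ℤ) : 0 ≤ quadForm Y p := by
  rcases eq_or_ne p 0 with rfl | hp
  · simp [quadForm]
  · exact (quadForm_pos hY hp).le

lemma quadForm_transpose_mul_diagonal_mul (B : Matrix (Fin 2) (Fin 2) ℝ) (y : Fin 2 → ℝ)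
    (p : Fin 2 → ℤ) :
    quadForm (Bᵀ * diagonal y * B) p = ∑ i, y i * (B *ᵥ fun j => (p j : ℝ)) i ^ 2 := by
  rw [quadForm, ← mulVec_mulVec, ← mulVec_mulVec, dotProduct_mulVec, vecMul_transpose,
    dotProduct]
  exact Finset.sum_congr rfl fun _ _ => by rw [mulVec_diagonal]; ring

/-- By Cayley–Hamilton, `tr Y • Y - det Y • 1 = Y ^ 2`, which is positive semidefinite. -/
lemma det_mul_le_trace_mul_quadForm (hY : Y 1 0 = Y 0 1) (p : Fin 2 → ℤ) :
    Y.det * (p 0 ^ 2 + p 1 ^ 2 : ℝ) ≤ Y.trace * quadForm Y p := by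
  rw [quadForm_apply, det_fin_two, trace_fin_two, hY]
  nlinarith [sq_nonneg (Y 0 0 * p 0 + Y 0 1 * p 1 : ℝ), sq_nonneg (Y 0 1 * p 0 + Y 1 1 * p 1 : ℝ)]

lemma finite_setOf_quadForm_le (hY : Y.PosDef) (C : ℝ) :
    {p : Fin 2 → ℤ | quadForm Y p ≤ C}.Finite := by
  set R : ℤ := ⌈Y.trace * C / Y.det⌉
  have hbound : ∀ p : Fin 2 → ℤ, quadForm Y p ≤ C → ∀ i, |p i| ≤ R := by
    intro p hp i
    have hsq : (p i : ℝ) ^ 2 ≤ Y.trace * C / Y.det := by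
      have key := det_mul_le_trace_mul_quadForm (hY.isHermitian.apply 0 1) p
      have hC := mul_le_mul_of_nonneg_left hp hY.trace_pos.le
      have hpi : (p i : ℝ) ^ 2 ≤ p 0 ^ 2 + p 1 ^ 2 := by fin_cases i <;> simp [sq_nonneg]
      rw [le_div_iff₀ hY.det_pos]
      nlinarith [hY.det_pos]
    have : p i ^ 2 ≤ R := by exact_mod_cast hsq.trans (Int.le_ceil _)
    nlinarith [sq_abs (p i), abs_nonneg (p i)]
  refine (Set.finite_Icc (fun _ => -R) (fun _ => R)).subset fun p hp =>
    ⟨fun i => neg_le_of_abs_le (hbound p hp i), fun i => le_of_abs_le (hbound p hp i)⟩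

def IsMinimalVector (Y : Matrix (Fin 2) (Fin 2) ℝ) (p : Fin 2 → ℤ) : Prop :=
  p ≠ 0 ∧ ∀ q : Fin 2 → ℤ, q ≠ 0 → quadForm Y p ≤ quadForm Y q

lemma exists_isMinimalVector (hY : Y.PosDef) : ∃ p, IsMinimalVector Y p := by
  set e : Fin 2 → ℤ := Pi.single 0 1
  have he : e ≠ 0 := Pi.single_ne_zero_iff.mpr one_ne_zero
  set F := {p : Fin 2 → ℤ | quadForm Y p ≤ quadForm Y e} \ {0}
  have hF : F.Finite := (finite_setOf_quadForm_le hY _).sdiff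
  obtain ⟨p, ⟨hpe, hp0⟩, hmin⟩ :=
    F.exists_min_image (quadForm Y) hF ⟨e, (le_rfl : quadForm Y e ≤ _), he⟩
  refine ⟨p, hp0, fun q hq => ?_⟩
  by_cases hqe : quadForm Y q ≤ quadForm Y e
  · exact hmin q ⟨hqe, hq⟩
  · exact hpe.trans (not_le.mp hqe).le

namespace IsMinimalVector

variable {p : Fin 2 → ℤ}

lemma m1_eq (hp : IsMinimalVector Y p) : m1 Y = quadForm Y p :=
  IsLeast.csInf_eq ⟨⟨p, hp.1, rfl⟩, by rintro _ ⟨q, hq, rfl⟩; exact hp.2 q hq⟩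

lemma isCoprime (hY : Y.PosDef) (hp : IsMinimalVector Y p) : IsCoprime (p 0) (p 1) := by
  rw [Int.isCoprime_iff_gcd_eq_one]
  set g : ℕ := Int.gcd (p 0) (p 1)
  set p' : Fin 2 → ℤ := fun i => p i / g
  have hdvd : ∀ i, (g : ℤ) ∣ p i := by
    intro i; fin_cases i
    exacts [Int.gcd_dvd_left _ _, Int.gcd_dvd_right _ _]
  have hp' : (g : ℤ) • p' = p := funext fun i => Int.mul_ediv_cancel' (hdvd i)
  have hp'0 : p' ≠ 0 := by rintro h; rw [h, smul_zero] at hp'; exact hp.1 hp'.symm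
  have hg : (g : ℝ) ^ 2 * quadForm Y p' ≤ 1 * quadForm Y p' := by
    rw [one_mul]
    have := hp.2 p' hp'0
    rwa [← hp', quadForm_smul, Int.cast_natCast] at this
  have hg1 : (g : ℝ) ^ 2 ≤ 1 := le_of_mul_le_mul_right hg (quadForm_pos hY hp'0)
  have hg0 : g ≠ 0 := fun h => hp.1 (by
    obtain ⟨h0, h1⟩ := Int.gcd_eq_zero_iff.mp h
    ext i; fin_cases i <;> simp [h0, h1])
  have : g ≤ 1 := by
    exact_mod_cast (pow_le_one_iff_of_nonneg (Nat.cast_nonneg g) two_ne_zero).mp hg1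
  omega

end IsMinimalVector

noncomputable def polarForm (Y : Matrix (Fin 2) (Fin 2) ℝ) (p q : Fin 2 → ℤ) : ℝ :=
  (fun i => (p i : ℝ)) ⬝ᵥ Y *ᵥ (fun i => (q i : ℝ))

lemma polarForm_apply (Y : Matrix (Fin 2) (Fin 2) ℝ) (p q : Fin 2 → ℤ) :
    polarForm Y p q = Y 0 0 * (p 0 * q 0) + Y 0 1 * (p 0 * q 1) + Y 1 0 * (p 1 * q 0)
      + Y 1 1 * (p 1 * q 1) := by
  simp only [polarForm, dotProduct, mulVec, Fin.sum_univ_two]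
  ring

lemma polarForm_add_smul (hY : Y 1 0 = Y 0 1) (p q : Fin 2 → ℤ) (t : ℤ) :
    polarForm Y p (q + t • p) = polarForm Y p q + t * quadForm Y p := by
  simp only [polarForm_apply, quadForm_apply, Pi.add_apply, Pi.smul_apply, smul_eq_mul,
    Int.cast_add, Int.cast_mul, hY]
  ring

lemma quadForm_mul_quadForm_sub_polarForm_sq (hY : Y 1 0 = Y 0 1) (p q : Fin 2 → ℤ) :
    quadForm Y p * quadForm Y q - polarForm Y p q ^ 2 =
      Y.det * ((p 0 * q 1 - p 1 * q 0 : ℤ) : ℝ) ^ 2 := by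
  simp only [polarForm_apply, quadForm_apply, det_fin_two, hY]
  push_cast
  ring

lemma exists_det_eq_one_abs_polarForm_le (hY : Y 1 0 = Y 0 1) {p : Fin 2 → ℤ}
    (hp : 0 < quadForm Y p) (hcop : IsCoprime (p 0) (p 1)) :
    ∃ q : Fin 2 → ℤ, p 0 * q 1 - p 1 * q 0 = 1 ∧ |polarForm Y p q| ≤ quadForm Y p / 2 := by
  obtain ⟨a, b, hab⟩ := hcop
  set q₀ : Fin 2 → ℤ := ![-b, a]
  set x := polarForm Y p q₀ / quadForm Y p
  refine ⟨q₀ + (-round x) • p, ?_, ?_⟩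
  · simp only [q₀, Pi.add_apply, Pi.smul_apply, smul_eq_mul, Matrix.cons_val_zero,
      Matrix.cons_val_one]
    linear_combination hab
  · have hx : polarForm Y p (q₀ + (-round x) • p) = quadForm Y p * (x - round x) := by
      have hQx : quadForm Y p * x = polarForm Y p q₀ := mul_div_cancel₀ _ hp.ne'
      rw [polarForm_add_smul hY, Int.cast_neg]
      linear_combination -hQx
    rw [hx, abs_mul, abs_of_pos hp]
    nlinarith [abs_sub_round x]

lemma linearIndependent_of_det_ne_zero {p q : Fin 2 → ℤ} (h : p 0 * q 1 - p 1 * q 0 ≠ 0) :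
    LinearIndependent ℤ ![p, q] := by
  refine LinearIndependent.pair_iff.mpr fun s t hst => ?_
  have h0 : s * p 0 + t * q 0 = 0 := by simpa using congrFun hst 0
  have h1 : s * p 1 + t * q 1 = 0 := by simpa using congrFun hst 1
  constructor
  · exact (mul_eq_zero.mp (by linear_combination q 1 * h0 - q 0 * h1 :
      s * (p 0 * q 1 - p 1 * q 0) = 0)).resolve_right h
  · exact (mul_eq_zero.mp (by linear_combination p 0 * h1 - p 1 * h0 :
      t * (p 0 * q 1 - p 1 * q 0) = 0)).resolve_right h

/-- Hermite's inequality for binary forms: a partner `q` of `p` forming a basis of `ℤ²` and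
reduced against it (`|B(p, q)| ≤ Q(p) / 2`) has
`Q(p) Q(q) = det Y + B(p, q)² ≤ det Y + Q(p) Q(q) / 4`. -/
lemma IsMinimalVector.exists_linearIndependent_quadForm_mul_quadForm_le (hY : Y.PosDef)
    {p : Fin 2 → ℤ} (hp : IsMinimalVector Y p) :
    ∃ q : Fin 2 → ℤ, LinearIndependent ℤ ![p, q] ∧
      quadForm Y p * quadForm Y q ≤ 4 / 3 * Y.det := by
  have hsym : Y 1 0 = Y 0 1 := hY.isHermitian.apply 0 1
  have hpos := quadForm_pos hY hp.1
  obtain ⟨q, hdet, hred⟩ := exists_det_eq_one_abs_polarForm_le hsym hpos (hp.isCoprime hY)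
  have hind := linearIndependent_of_det_ne_zero (hdet ▸ one_ne_zero)
  have hgram := quadForm_mul_quadForm_sub_polarForm_sq hsym p q
  rw [hdet, Int.cast_one, one_pow, mul_one] at hgram
  have hpq := hp.2 q (by simpa using hind.ne_zero 1)
  refine ⟨q, hind, ?_⟩
  nlinarith [abs_le.mp hred, mul_le_mul_of_nonneg_left hpq hpos.le]

lemma m1_le_quadForm (hY : Y.PosDef) {p : Fin 2 → ℤ} (hp : p ≠ 0) : m1 Y ≤ quadForm Y p :=
  csInf_le ⟨0, by rintro _ ⟨q, -, rfl⟩; exact quadForm_nonneg hY q⟩ ⟨p, hp, rfl⟩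

lemma le_m1 {L : ℝ} (hL : ∀ p : Fin 2 → ℤ, p ≠ 0 → L ≤ quadForm Y p) : L ≤ m1 Y :=
  le_csInf ⟨_, Pi.single 0 1, Pi.single_ne_zero_iff.mpr one_ne_zero, rfl⟩
    (by rintro _ ⟨q, hq, rfl⟩; exact hL q hq)

lemma m2_le_quadForm (hY : Y.PosDef) {p q : Fin 2 → ℤ} (hp : p ≠ 0) (hpm : quadForm Y p = m1 Y)
    (hpq : LinearIndependent ℤ ![p, q]) : m2 Y ≤ quadForm Y q :=
  csInf_le ⟨0, by rintro _ ⟨_, q', -, -, -, rfl⟩; exact quadForm_nonneg hY q'⟩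
    ⟨p, q, hp, hpm, hpq, rfl⟩

lemma m1_le_m2 (hY : Y.PosDef) : m1 Y ≤ m2 Y := by
  obtain ⟨p, hp⟩ := exists_isMinimalVector hY
  obtain ⟨q, hpq, -⟩ := hp.exists_linearIndependent_quadForm_mul_quadForm_le hY
  refine le_csInf ⟨_, p, q, hp.1, hp.m1_eq.symm, hpq, rfl⟩ ?_
  rintro _ ⟨_, q', -, -, hind, rfl⟩
  exact m1_le_quadForm hY (by simpa using hind.ne_zero 1)

lemma m1_mul_m2_le (hY : Y.PosDef) : m1 Y * m2 Y ≤ 4 / 3 * Y.det := by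
  obtain ⟨p, hp⟩ := exists_isMinimalVector hY
  obtain ⟨q, hpq, hQ⟩ := hp.exists_linearIndependent_quadForm_mul_quadForm_le hY
  rw [hp.m1_eq]
  calc quadForm Y p * m2 Y ≤ quadForm Y p * quadForm Y q :=
        mul_le_mul_of_nonneg_left (m2_le_quadForm hY hp.1 hp.m1_eq.symm hpq)
          (quadForm_nonneg hY p)
    _ ≤ 4 / 3 * Y.det := hQ

lemma le_m1_and_m2_le_of_det_eq (hY : Y.PosDef) {a Δ N : ℝ} (ha : 0 < a) (hΔ : 0 < Δ)
    (hN : 0 < N) (hdet : Y.det = a * Δ * N ^ 2)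
    (hL : ∀ p : Fin 2 → ℤ, p ≠ 0 → 2 * √a * N ≤ quadForm Y p) :
    2 / √Δ * N * √(a * Δ) ≤ m1 Y ∧ m2 Y ≤ 2 * √Δ / 3 * N * √(a * Δ) := by
  have hm1 := le_m1 hL
  have hL0 : 0 < 2 * √a * N := by positivity
  rw [Real.sqrt_mul ha.le]
  constructor
  · calc _ = 2 * √a * N := by field_simp
      _ ≤ m1 Y := hm1
  · have hm2 : m2 Y * (2 * √a * N) ≤ 4 / 3 * (a * Δ * N ^ 2) := by
      rw [← hdet, mul_comm]
      calc 2 * √a * N * m2 Y ≤ m1 Y * m2 Y :=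
            mul_le_mul_of_nonneg_right hm1 ((hL0.trans_le hm1).trans_le (m1_le_m2 hY)).le
        _ ≤ 4 / 3 * Y.det := m1_mul_m2_le hY
    refine le_of_mul_le_mul_right (hm2.trans_eq ?_) hL0
    linear_combination (-4 / 3 * N ^ 2 * √Δ ^ 2) * Real.sq_sqrt ha.le
      - 4 / 3 * N ^ 2 * a * Real.sq_sqrt hΔ.le

end BinaryQuadraticForm

lemma posDef_transpose_mul_diagonal_mul {n : Type*} [Fintype n] [DecidableEq n]
    {B : Matrix n n ℝ} (hB : B.det ≠ 0) {y : n → ℝ} (hy : ∀ i, 0 < y i) :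
    (Bᵀ * diagonal y * B).PosDef := by
  rw [← conjTranspose_eq_transpose_of_trivial]
  exact (PosDef.diagonal hy).conjTranspose_mul_mul_same
    (mulVec_injective_iff_isUnit.mpr ((isUnit_iff_isUnit_det B).mpr hB.isUnit))

lemma det_transpose_mul_diagonal_mul {n : Type*} [Fintype n] [DecidableEq n]
    (B : Matrix n n ℝ) (y : n → ℝ) : (Bᵀ * diagonal y * B).det = B.det ^ 2 * ∏ i, y i := by
  rw [det_mul, det_mul, det_transpose, det_diagonal]
  ring

lemma map_im_eq_transpose_mul_diagonal_mul {K ι n : Type*} [Field K] [Fintype ι]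
    [DecidableEq ι] (φ : ι → K →+* ℂ) (w : K) (b : n → K) (hb : ∀ i j, (φ i (b j)).im = 0)
    {Z : Matrix n n ℂ} (hZ : ∀ j k, Z j k = ∑ i, φ i (w * b j * b k)) :
    Z.map Complex.im =
      (of fun i j => (φ i (b j)).re)ᵀ * diagonal (fun i => (φ i w).im) *
        of fun i j => (φ i (b j)).re := by
  ext j k
  simp only [hZ, map_mul, map_apply, of_apply, Complex.im_sum, Complex.mul_im, Complex.mul_re,
    hb, mul_zero, sub_zero, zero_add, mul_apply, transpose_apply, diagonal_apply, mul_ite,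
    Finset.sum_ite_eq', Finset.mem_univ, ↓reduceIte]
  exact Finset.sum_congr rfl fun _ _ => by ring

lemma det_of_re_apply_eq {F : Type*} [Field F] {σ : Fin 2 → F →+* ℂ}
    (hreal : ∀ i x, (σ i x).im = 0) {c : F → F} (hc : ∀ x, σ 0 (c x) = σ 1 x)
    {bv : Fin 2 → F} {N : ℚ} {δ : F} (h : bv 0 * c (bv 1) - bv 1 * c (bv 0) = N * δ) :
    (of fun i j => (σ i (bv j)).re).det = N * (σ 0 δ).re := by
  rw [det_fin_two]
  simpa [Complex.mul_re, hreal, hc] using congrArg (fun u => (σ 0 u).re) h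

lemma eq_or_eq_or_eq_of_card_le_two {α : Type*} [Fintype α] (h : Fintype.card α ≤ 2)
    (a b c : α) : a = b ∨ a = c ∨ b = c := by
  classical
  by_contra! hne
  have h3 : ({a, b, c} : Finset α).card = 3 :=
    Finset.card_eq_three.mpr ⟨a, b, c, hne.1, hne.2.1, hne.2.2, rfl⟩
  have := Finset.card_le_univ ({a, b, c} : Finset α)
  omega

lemma RingHom.eq_or_eq_or_eq_of_finrank_eq_two {F E L : Type*} [Field F] [Field E] [Field L]
    [CharZero F] [IsAlgClosed L] [Algebra F E] (hE : Module.finrank F E = 2) {f g h : E →+* L}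
    (hfg : f.comp (algebraMap F E) = g.comp (algebraMap F E))
    (hfh : f.comp (algebraMap F E) = h.comp (algebraMap F E)) : f = g ∨ f = h ∨ g = h := by
  let : Algebra F L := (f.comp (algebraMap F E)).toAlgebra
  have : FiniteDimensional F E := Module.finite_of_finrank_eq_succ hE
  let lift (k : E →+* L) (hk : f.comp (algebraMap F E) = k.comp (algebraMap F E)) :
      E →ₐ[F] L := { k with commutes' := fun x => (RingHom.congr_fun hk x).symm }
  have hcard : Fintype.card (E →ₐ[F] L) ≤ 2 := ((AlgHom.card F E L).trans hE).le
  have key := eq_or_eq_or_eq_of_card_le_two hcard (lift f rfl) (lift g hfg) (lift h hfh)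
  simp only [← AlgHom.coe_ringHom_injective.eq_iff] at key
  exact key

lemma apply_algEquiv_eq_starRingEnd {K₀ K : Type*} [Field K₀] [Field K] [Algebra K₀ K]
    (hK : Module.finrank K₀ K = 2) (conj : K ≃ₐ[K₀] K) (hconj : ∃ x, conj x ≠ x)
    {φ : K →+* ℂ} (hreal : ∀ x : K₀, (φ (algebraMap K₀ K x)).im = 0)
    (hφ : ∃ x, (φ x).im ≠ 0) (x : K) : φ (conj x) = starRingEnd ℂ (φ x) := by
  have := (φ.comp (algebraMap K₀ K)).charZero
  have hconj' : φ.comp (algebraMap K₀ K) = (φ.comp conj.toRingHom).comp (algebraMap K₀ K) :=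
    RingHom.ext fun a => by simp
  have hstar : φ.comp (algebraMap K₀ K) = ((starRingEnd ℂ).comp φ).comp (algebraMap K₀ K) :=
    RingHom.ext fun a => (Complex.conj_eq_iff_im.mpr (hreal a)).symm
  rcases RingHom.eq_or_eq_or_eq_of_finrank_eq_two hK hconj' hstar with h | h | h
  · obtain ⟨y, hy⟩ := hconj
    exact absurd (φ.injective (RingHom.congr_fun h y)).symm hy
  · obtain ⟨y, hy⟩ := hφ
    have := congrArg Complex.im (RingHom.congr_fun h y)
    simp only [RingHom.comp_apply, Complex.conj_im] at this
    exact absurd (by linarith) hy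
  · exact RingHom.congr_fun h x

lemma RingHom.comp_algebraMap_ne_of_im_pos {K₀ K : Type*} [Field K₀] [Field K] [Algebra K₀ K]
    (hK : Module.finrank K₀ K = 2) {φ₁ φ₂ : K →+* ℂ}
    (hreal : ∀ x : K₀, (φ₁ (algebraMap K₀ K x)).im = 0) (hφ : φ₁ ≠ φ₂) {w : K}
    (hw₁ : 0 < (φ₁ w).im) (hw₂ : 0 < (φ₂ w).im) :
    φ₁.comp (algebraMap K₀ K) ≠ φ₂.comp (algebraMap K₀ K) := by
  have := (φ₁.comp (algebraMap K₀ K)).charZero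
  intro h
  have hstar : φ₁.comp (algebraMap K₀ K) = ((starRingEnd ℂ).comp φ₁).comp (algebraMap K₀ K) :=
    RingHom.ext fun a => (Complex.conj_eq_iff_im.mpr (hreal a)).symm
  have him {φ ψ : K →+* ℂ} (e : φ = ψ) : (φ w).im = (ψ w).im := by rw [e]
  rcases RingHom.eq_or_eq_or_eq_of_finrank_eq_two hK h hstar with h' | h' | h'
  · exact hφ h'
  · have := him h'
    simp only [RingHom.coe_comp, Function.comp_apply, Complex.conj_im] at this
    linarith
  · have := him h'
    simp only [RingHom.coe_comp, Function.comp_apply, Complex.conj_im] at this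
    linarith

lemma apply_algEquiv_eq_of_ne {F : Type*} [Field F] [NumberField F]
    (hF : Module.finrank ℚ F = 2) (c : F ≃ₐ[ℚ] F) (hc : ∃ x, c x ≠ x) {σ₁ σ₂ : F →+* ℂ}
    (hσ : σ₁ ≠ σ₂) (x : F) : σ₁ (c x) = σ₂ x := by
  have hcard : Fintype.card (F →+* ℂ) ≤ 2 := (NumberField.Embeddings.card F ℂ).trans hF |>.le
  rcases eq_or_eq_or_eq_of_card_le_two hcard σ₁ (σ₁.comp c.toRingHom) σ₂ with h | h | h
  · obtain ⟨y, hy⟩ := hc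
    exact absurd (σ₁.injective (RingHom.congr_fun h y)).symm hy
  · exact absurd h hσ
  · exact RingHom.congr_fun h x

lemma norm_eq_prod_of_card_eq {K : Type*} [Field K] [NumberField K] {s : Finset (K →+* ℂ)}
    (hs : s.card = Module.finrank ℚ K) (x : K) :
    ((Algebra.norm ℚ x : ℚ) : ℂ) = ∏ φ ∈ s, φ x := by
  have h := Algebra.norm_eq_prod_embeddings ℚ ℂ x
  rw [eq_ratCast (algebraMap ℚ ℂ)] at h
  rw [Finset.eq_univ_of_card s (hs.trans (NumberField.Embeddings.card K ℂ).symm), h]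
  exact (Fintype.prod_equiv (RingHom.equivRatAlgHom K ℂ) (fun φ => φ x) (fun σ => σ x)
    fun _ => rfl).symm

lemma norm_eq_mul_of_ne {K : Type*} [Field K] [NumberField K] (hK : Module.finrank ℚ K = 2)
    {σ₁ σ₂ : K →+* ℂ} (hσ : σ₁ ≠ σ₂) (x : K) :
    ((Algebra.norm ℚ x : ℚ) : ℂ) = σ₁ x * σ₂ x := by
  classical
  rw [norm_eq_prod_of_card_eq (s := {σ₁, σ₂}) ((Finset.card_pair hσ).trans hK.symm),
    Finset.prod_pair hσ]

/-- The four embeddings `φ₁, φ₂, φ̄₁, φ̄₂` are distinct (compare signs of `Im (· w)`), so they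
are all the embeddings of a quartic field. -/
lemma norm_eq_normSq_mul_normSq {K : Type*} [Field K] [NumberField K]
    (hK : Module.finrank ℚ K = 4) {φ₁ φ₂ : K →+* ℂ} (hφ : φ₁ ≠ φ₂) {w : K}
    (hw₁ : 0 < (φ₁ w).im) (hw₂ : 0 < (φ₂ w).im) (x : K) :
    ((Algebra.norm ℚ x : ℚ) : ℝ) = Complex.normSq (φ₁ x) * Complex.normSq (φ₂ x) := by
  classical
  set ψ₁ := (starRingEnd ℂ).comp φ₁
  set ψ₂ := (starRingEnd ℂ).comp φ₂
  have him : ∀ {φ ψ : K →+* ℂ}, (φ w).im ≠ (ψ w).im → φ ≠ ψ := fun h e => h (by rw [e])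
  have h1 : φ₁ ∉ ({φ₂, ψ₁, ψ₂} : Finset _) := by
    simp only [Finset.mem_insert, Finset.mem_singleton, not_or]
    refine ⟨hφ, him ?_, him ?_⟩ <;>
      simp only [ψ₁, ψ₂, RingHom.coe_comp, Function.comp_apply, Complex.conj_im, ne_eq] <;> linarith
  have h2 : φ₂ ∉ ({ψ₁, ψ₂} : Finset _) := by
    simp only [Finset.mem_insert, Finset.mem_singleton, not_or]
    refine ⟨him ?_, him ?_⟩ <;>
      simp only [ψ₁, ψ₂, RingHom.coe_comp, Function.comp_apply, Complex.conj_im, ne_eq] <;> linarith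
  have h3 : ψ₁ ≠ ψ₂ := fun h =>
    hφ (RingHom.ext fun y => (starRingEnd ℂ).injective (RingHom.congr_fun h y))
  have hcard : ({φ₁, φ₂, ψ₁, ψ₂} : Finset _).card = Module.finrank ℚ K := by
    rw [Finset.card_insert_of_notMem h1, Finset.card_insert_of_notMem h2, Finset.card_pair h3, hK]
  have := norm_eq_prod_of_card_eq hcard x
  rw [Finset.prod_insert h1, Finset.prod_insert h2, Finset.prod_pair h3] at this
  apply Complex.ofReal_injective
  rw [Complex.ofReal_ratCast, this, Complex.ofReal_mul, Complex.normSq_eq_conj_mul_self,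
    Complex.normSq_eq_conj_mul_self]
  simp only [ψ₁, ψ₂, RingHom.comp_apply]
  ring

lemma normSq_apply_sub_div_two {K : Type*} [Field K] {φ : K →+* ℂ} {conj : K → K}
    {x : K} (hx : φ (conj x) = starRingEnd ℂ (φ x)) :
    Complex.normSq (φ ((x - conj x) / 2)) = (φ x).im ^ 2 := by
  rw [map_div₀, map_sub, hx, Complex.sub_conj, map_ofNat, Complex.normSq_div,
    Complex.normSq_mul, Complex.normSq_ofReal, Complex.normSq_I, Complex.normSq_ofNat]
  ring

lemma sqrt_abs_norm_sub_conj_div_two {K₀ K : Type*} [Field K₀] [Field K] [NumberField K]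
    [Algebra K₀ K] (hK : Module.finrank ℚ K = 4) (hK₀K : Module.finrank K₀ K = 2)
    (conj : K ≃ₐ[K₀] K) (hconj : ∃ x, conj x ≠ x) {φ₁ φ₂ : K →+* ℂ} (hφ : φ₁ ≠ φ₂)
    (hreal₁ : ∀ x : K₀, (φ₁ (algebraMap K₀ K x)).im = 0)
    (hreal₂ : ∀ x : K₀, (φ₂ (algebraMap K₀ K x)).im = 0) {z : K} {δ : K₀}
    (hw₁ : 0 < (φ₁ (z * (algebraMap K₀ K δ)⁻¹)).im)
    (hw₂ : 0 < (φ₂ (z * (algebraMap K₀ K δ)⁻¹)).im) {D : ℝ} (hD : 0 ≤ D)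
    (hδ₁ : (φ₁ (algebraMap K₀ K δ)).re ^ 2 = D) (hδ₂ : (φ₂ (algebraMap K₀ K δ)).re ^ 2 = D) :
    √|((Algebra.norm ℚ ((z - conj z) / 2) : ℚ) : ℝ)| =
      (φ₁ (z * (algebraMap K₀ K δ)⁻¹)).im * (φ₂ (z * (algebraMap K₀ K δ)⁻¹)).im * D := by
  have hδ0 : algebraMap K₀ K δ ≠ 0 := fun h => by simp [h] at hw₁
  obtain ⟨w, rfl⟩ : ∃ w, z = w * algebraMap K₀ K δ := ⟨_, (inv_mul_cancel_right₀ hδ0 z).symm⟩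
  rw [mul_inv_cancel_right₀ hδ0] at hw₁ hw₂ ⊢
  have hconj₁ := apply_algEquiv_eq_starRingEnd hK₀K conj hconj hreal₁ ⟨w, hw₁.ne'⟩
  have hconj₂ := apply_algEquiv_eq_starRingEnd hK₀K conj hconj hreal₂ ⟨w, hw₂.ne'⟩
  rw [norm_eq_normSq_mul_normSq hK hφ hw₁ hw₂, normSq_apply_sub_div_two (hconj₁ _),
    normSq_apply_sub_div_two (hconj₂ _), map_mul, map_mul, Complex.mul_im, Complex.mul_im,
    hreal₁, hreal₂, mul_zero, mul_zero, zero_add, zero_add]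
  have : ((φ₁ w).im * (φ₁ (algebraMap K₀ K δ)).re) ^ 2 *
      ((φ₂ w).im * (φ₂ (algebraMap K₀ K δ)).re) ^ 2 = ((φ₁ w).im * (φ₂ w).im * D) ^ 2 := by
    linear_combination ((φ₁ w).im * (φ₂ w).im) ^ 2 *
      ((φ₂ (algebraMap K₀ K δ)).re ^ 2 * hδ₁ + D * hδ₂)
  rw [this, abs_sq, Real.sqrt_sq (by positivity)]

lemma FractionalIdeal.absNorm_pos {K : Type*} [Field K] [NumberField K]
    {b : FractionalIdeal (𝓞 K)⁰ K} (hb : b ≠ 0) : 0 < absNorm b :=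
  (absNorm_nonneg b).lt_of_ne' (absNorm_eq_zero_iff.not.mpr hb)

lemma FractionalIdeal.absNorm_le_abs_norm_of_mem {K : Type*} [Field K] [NumberField K]
    {b : FractionalIdeal (𝓞 K)⁰ K} (hb : b ≠ 0) {β : K} (hβ : β ∈ b) (hβ0 : β ≠ 0) :
    absNorm b ≤ |Algebra.norm ℚ β| := by
  set J := b⁻¹ * spanSingleton (𝓞 K)⁰ β
  have hJ1 : J ≤ 1 := by
    calc J ≤ b⁻¹ * b := mul_le_mul_right (spanSingleton_le_iff_mem.mpr hβ) _
      _ = 1 := inv_mul_cancel₀ hb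
  obtain ⟨I, hI⟩ := le_one_iff_exists_coeIdeal.mp hJ1
  have hI0 : I ≠ ⊥ := by
    rintro rfl
    rw [coeIdeal_bot] at hI
    exact mul_ne_zero (inv_ne_zero hb) (spanSingleton_ne_zero_iff.mpr hβ0) hI.symm
  have hJ : 1 ≤ absNorm J := by
    rw [← hI, coeIdeal_absNorm]
    exact_mod_cast Nat.one_le_iff_ne_zero.mpr (Ideal.absNorm_eq_zero_iff.not.mpr hI0)
  have hbJ : absNorm b * absNorm J = |Algebra.norm ℚ β| := by
    rw [← map_mul, ← mul_assoc, mul_inv_cancel₀ hb, one_mul, absNorm_span_singleton]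
  rw [← hbJ]
  exact le_mul_of_one_le_right (absNorm_nonneg b) hJ

lemma two_mul_sqrt_mul_abs_mul_le {x y : ℝ} (hx : 0 ≤ x) (hy : 0 ≤ y) (s t : ℝ) :
    2 * √(x * y) * |s * t| ≤ x * s ^ 2 + y * t ^ 2 := by
  calc 2 * √(x * y) * |s * t| = 2 * (√x * |s|) * (√y * |t|) := by
        rw [abs_mul, Real.sqrt_mul hx]; ring
    _ ≤ (√x * |s|) ^ 2 + (√y * |t|) ^ 2 := two_mul_le_add_sq _ _
    _ = x * s ^ 2 + y * t ^ 2 := by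
        rw [mul_pow, mul_pow, Real.sq_sqrt hx, Real.sq_sqrt hy, sq_abs, sq_abs]

lemma two_mul_sqrt_mul_absNorm_le_quadForm {F : Type*} [Field F] [NumberField F]
    (hF : Module.finrank ℚ F = 2) {σ : Fin 2 → F →+* ℂ} (hσ : σ 0 ≠ σ 1)
    (hreal : ∀ i x, (σ i x).im = 0) {b : FractionalIdeal (𝓞 F)⁰ F} (hb : b ≠ 0)
    {bv : Fin 2 → F} (hbv : LinearIndependent ℤ bv) (hbv_mem : ∀ j, bv j ∈ b)
    {y : Fin 2 → ℝ} (hy : ∀ i, 0 ≤ y i) {p : Fin 2 → ℤ} (hp : p ≠ 0) :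
    2 * √(y 0 * y 1) * (FractionalIdeal.absNorm b : ℝ) ≤
      quadForm ((of fun i j => (σ i (bv j)).re)ᵀ * diagonal y * of fun i j => (σ i (bv j)).re)
        p := by
  set β := ∑ j, p j • bv j
  have hβ : β ∈ (b : Submodule (𝓞 F) F) :=
    sum_mem fun j _ => zsmul_mem (FractionalIdeal.mem_coe.mpr (hbv_mem j)) _
  have hβ0 : β ≠ 0 := fun h => hp (funext (Fintype.linearIndependent_iff.mp hbv p h))
  have hBv : ∀ i, ((of fun i j => (σ i (bv j)).re) *ᵥ fun j => (p j : ℝ)) i = (σ i β).re := by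
    intro i
    simp only [β, mulVec, dotProduct, of_apply, Fin.sum_univ_two, zsmul_eq_mul, map_add,
      map_mul, map_intCast, Complex.add_re, Complex.mul_re, Complex.intCast_re,
      Complex.intCast_im, zero_mul, sub_zero]
    ring
  have hnorm : ((Algebra.norm ℚ β : ℚ) : ℝ) = (σ 0 β).re * (σ 1 β).re := by
    simpa [Complex.mul_re, hreal] using congrArg Complex.re (norm_eq_mul_of_ne hF hσ β)
  rw [quadForm_transpose_mul_diagonal_mul, Fin.sum_univ_two, hBv, hBv]
  calc 2 * √(y 0 * y 1) * (FractionalIdeal.absNorm b : ℝ)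
      ≤ 2 * √(y 0 * y 1) * |(σ 0 β).re * (σ 1 β).re| := by
        rw [← hnorm]
        gcongr
        exact_mod_cast FractionalIdeal.absNorm_le_abs_norm_of_mem hb hβ hβ0
    _ ≤ _ := two_mul_sqrt_mul_abs_mul_le (hy 0) (hy 1) _ _

theorem stmt_10_general
    (K₀ K : Type*) [Field K₀] [Field K] [NumberField K₀] [NumberField K] [Algebra K₀ K]
    (hdegK : Module.finrank ℚ K = 4)
    (hdegK₀ : Module.finrank ℚ K₀ = 2)
    (hquad : Module.finrank K₀ K = 2)
    (htotreal : ∀ φ : K₀ →+* ℂ, ∀ x : K₀, (φ x).im = 0)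
    (conj : K ≃ₐ[K₀] K) (hconj : ∃ x : K, conj x ≠ x)
    -- δ ∈ K₀ is a square root of the discriminant Δ₀ of K₀
    (δ : K₀) (hδ : δ ^ 2 = (NumberField.discr K₀ : K₀))
    -- c is the nontrivial automorphism of K₀
    (c : K₀ ≃ₐ[ℚ] K₀) (hc : ∃ x : K₀, c x ≠ x)
    -- b is a fractional 𝓞 K₀-ideal with ℤ-basis b₁, b₂
    (b : FractionalIdeal (𝓞 K₀)⁰ K₀) (hb : b ≠ 0)
    (bv : Fin 2 → K₀)
    (hbv_indep : LinearIndependent ℤ bv)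
    (hbv_span : ∀ x : K₀, x ∈ b ↔ x ∈ Submodule.span ℤ (Set.range bv))
    -- b₁b₂ᶜ − b₂b₁ᶜ = N(b)·δ
    (hbasis : bv 0 * c (bv 1) - bv 1 * c (bv 0) = ((FractionalIdeal.absNorm b : ℚ) : K₀) * δ)
    (z : K)
    -- the two embeddings with Im φ(zδ⁻¹) > 0, one from each complex-conjugate pair
    (φ₁ φ₂ : K →+* ℂ) (hφne : φ₁ ≠ φ₂)
    (hφ₁ : 0 < (φ₁ (z * (algebraMap K₀ K δ)⁻¹)).im)
    (hφ₂ : 0 < (φ₂ (z * (algebraMap K₀ K δ)⁻¹)).im)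
    -- the period matrix Z
    (Z : Matrix (Fin 2) (Fin 2) ℂ)
    (hZ : ∀ j k, Z j k =
      φ₁ (z * (algebraMap K₀ K δ)⁻¹ * algebraMap K₀ K (bv j) * algebraMap K₀ K (bv k)) +
      φ₂ (z * (algebraMap K₀ K δ)⁻¹ * algebraMap K₀ K (bv j) * algebraMap K₀ K (bv k))) :
    (Z.map Complex.im).PosDef ∧
    (Z.map Complex.im).det =
      Real.sqrt |((Algebra.norm ℚ ((z - conj z) / 2) : ℚ) : ℝ)| *
        ((FractionalIdeal.absNorm b : ℚ) : ℝ) ^ 2 ∧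
    2 / Real.sqrt (NumberField.discr K₀ : ℝ) * ((FractionalIdeal.absNorm b : ℚ) : ℝ) *
        Real.sqrt (Real.sqrt |((Algebra.norm ℚ ((z - conj z) / 2) : ℚ) : ℝ)|) ≤
      m1 (Z.map Complex.im) ∧
    m1 (Z.map Complex.im) ≤ m2 (Z.map Complex.im) ∧
    m2 (Z.map Complex.im) ≤
      2 * Real.sqrt (NumberField.discr K₀ : ℝ) / 3 * ((FractionalIdeal.absNorm b : ℚ) : ℝ) *
        Real.sqrt (Real.sqrt |((Algebra.norm ℚ ((z - conj z) / 2) : ℚ) : ℝ)|) := by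
  set w := z * (algebraMap K₀ K δ)⁻¹
  set φ : Fin 2 → K →+* ℂ := ![φ₁, φ₂]
  set σ : Fin 2 → K₀ →+* ℂ := fun i => (φ i).comp (algebraMap K₀ K)
  set y : Fin 2 → ℝ := fun i => (φ i w).im
  set B : Matrix (Fin 2) (Fin 2) ℝ := of fun i j => (σ i (bv j)).re
  set N : ℝ := ((FractionalIdeal.absNorm b : ℚ) : ℝ)
  set Δ : ℝ := (NumberField.discr K₀ : ℝ)
  have hy : ∀ i, 0 < y i := Fin.forall_fin_two.mpr ⟨hφ₁, hφ₂⟩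
  have hreal : ∀ i x, (σ i x).im = 0 := fun i => htotreal (σ i)
  have hσ : σ 0 ≠ σ 1 := RingHom.comp_algebraMap_ne_of_im_pos hquad (hreal 0) hφne hφ₁ hφ₂
  have hδΔ : ∀ i, (σ i δ).re ^ 2 = Δ := fun i => by
    simpa [sq, Complex.mul_re, hreal, Δ] using congrArg (fun u => (σ i u).re) hδ
  have hΔ : 0 < Δ := (hδΔ 0 ▸ sq_nonneg _).lt_of_ne' (by simpa [Δ] using discr_ne_zero K₀)
  have hN : 0 < N := Rat.cast_pos.mpr (FractionalIdeal.absNorm_pos hb)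
  have hdetB : B.det = N * (σ 0 δ).re :=
    det_of_re_apply_eq hreal (apply_algEquiv_eq_of_ne hdegK₀ c hc hσ) hbasis
  have hY : Z.map Complex.im = Bᵀ * diagonal y * B :=
    map_im_eq_transpose_mul_diagonal_mul φ w (fun j => algebraMap K₀ K (bv j))
      (fun i j => hreal i (bv j)) fun j k => by simp [hZ, Fin.sum_univ_two, φ]
  have hPD : (Bᵀ * diagonal y * B).PosDef := posDef_transpose_mul_diagonal_mul
    (hdetB ▸ mul_ne_zero hN.ne' ((pow_ne_zero_iff two_ne_zero).mp (hδΔ 0 ▸ hΔ.ne'))) hy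
  have hdet : (Bᵀ * diagonal y * B).det = y 0 * y 1 * Δ * N ^ 2 := by
    rw [det_transpose_mul_diagonal_mul, hdetB, Fin.prod_univ_two, mul_pow, hδΔ]
    ring
  have hI : √|((Algebra.norm ℚ ((z - conj z) / 2) : ℚ) : ℝ)| = y 0 * y 1 * Δ :=
    sqrt_abs_norm_sub_conj_div_two hdegK hquad conj hconj hφne (hreal 0) (hreal 1) hφ₁ hφ₂
      hΔ.le (hδΔ 0) (hδΔ 1)
  have hL (p : Fin 2 → ℤ) (hp : p ≠ 0) : 2 * √(y 0 * y 1) * N ≤ quadForm (Bᵀ * diagonal y * B) p :=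
    two_mul_sqrt_mul_absNorm_le_quadForm hdegK₀ hσ hreal hb hbv_indep
      (fun j => (hbv_span _).mpr (Submodule.subset_span ⟨j, rfl⟩)) (fun i => (hy i).le) hp
  obtain ⟨hm1, hm2⟩ :=
    le_m1_and_m2_le_of_det_eq hPD (mul_pos (hy 0) (hy 1)) hΔ hN hdet hL
  rw [hY, hI]
  exact ⟨hPD, hdet, hm1, m1_le_m2 hPD, hm2⟩

/-- Let `K` be a primitive quartic CM field, `δ ∈ K₀` with `δ² = Δ₀`,
`b` a fractional `𝓞 K₀`-ideal with ℤ-basis `b₁, b₂` satisfying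
`b₁b₂ᶜ − b₂b₁ᶜ = N(b)·δ`, and `z ∈ K \ K₀` such that `z·b + b⁻¹` is a fractional
`𝓞 K`-ideal.  Let `φ₁ ≠ φ₂` be the two embeddings `K → ℂ` with `Im φ(zδ⁻¹) > 0`, and let
`Z` be the symmetric matrix with entries `Z_{jk} = φ₁(zδ⁻¹b_jb_k) + φ₂(zδ⁻¹b_jb_k)`,
`Y = Im Z`.  Then `Y` is positive definite, `det Y = I(z)·N(b)²`, and
`(2/√Δ₀)·N(b)·I(z)^{1/2} ≤ m₁(Y) ≤ m₂(Y) ≤ (2√Δ₀/3)·N(b)·I(z)^{1/2}`,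
where `I(z) = |N_{K/ℚ}((z − z̄)/2)|^{1/2}`. -/
theorem stmt_10
    (K₀ K : Type*) [Field K₀] [Field K] [NumberField K₀] [NumberField K] [Algebra K₀ K]
    (hdegK : Module.finrank ℚ K = 4)
    (hdegK₀ : Module.finrank ℚ K₀ = 2)
    (hquad : Module.finrank K₀ K = 2)
    (htotreal : ∀ φ : K₀ →+* ℂ, ∀ x : K₀, (φ x).im = 0)
    (htotimag : ∀ φ : K →+* ℂ, ∃ x : K, (φ x).im ≠ 0)
    (hprim : ∀ F : Subfield K, Module.finrank ℚ F = 2 →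
      ∃ φ : F →+* ℂ, ∀ x : F, (φ x).im = 0)
    (conj : K ≃ₐ[K₀] K) (hconj : ∃ x : K, conj x ≠ x)
    -- δ ∈ K₀ is a square root of the discriminant Δ₀ of K₀
    (δ : K₀) (hδ : δ ^ 2 = (NumberField.discr K₀ : K₀))
    -- c is the nontrivial automorphism of K₀
    (c : K₀ ≃ₐ[ℚ] K₀) (hc : ∃ x : K₀, c x ≠ x)
    -- b is a fractional 𝓞 K₀-ideal with ℤ-basis b₁, b₂
    (b : FractionalIdeal (𝓞 K₀)⁰ K₀) (hb : b ≠ 0)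
    (bv : Fin 2 → K₀)
    (hbv_indep : LinearIndependent ℤ bv)
    (hbv_span : ∀ x : K₀, x ∈ b ↔ x ∈ Submodule.span ℤ (Set.range bv))
    -- b₁b₂ᶜ − b₂b₁ᶜ = N(b)·δ
    (hbasis : bv 0 * c (bv 1) - bv 1 * c (bv 0) = ((FractionalIdeal.absNorm b : ℚ) : K₀) * δ)
    -- z ∈ K, z ∉ K₀, and z·b + b⁻¹ is a fractional 𝓞 K-ideal (an 𝓞 K-submodule of K)
    (z : K) (hz : z ∉ Set.range (algebraMap K₀ K))
    (hmod : ∀ r : 𝓞 K, ∀ x ∈ b, ∀ y ∈ (b⁻¹ : FractionalIdeal (𝓞 K₀)⁰ K₀),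
      ∃ x' ∈ b, ∃ y' ∈ (b⁻¹ : FractionalIdeal (𝓞 K₀)⁰ K₀),
        algebraMap (𝓞 K) K r * (z * algebraMap K₀ K x + algebraMap K₀ K y) =
          z * algebraMap K₀ K x' + algebraMap K₀ K y')
    -- the two embeddings with Im φ(zδ⁻¹) > 0, one from each complex-conjugate pair
    (φ₁ φ₂ : K →+* ℂ) (hφne : φ₁ ≠ φ₂)
    (hφ₁ : 0 < (φ₁ (z * (algebraMap K₀ K δ)⁻¹)).im)
    (hφ₂ : 0 < (φ₂ (z * (algebraMap K₀ K δ)⁻¹)).im)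
    -- the period matrix Z
    (Z : Matrix (Fin 2) (Fin 2) ℂ)
    (hZ : ∀ j k, Z j k =
      φ₁ (z * (algebraMap K₀ K δ)⁻¹ * algebraMap K₀ K (bv j) * algebraMap K₀ K (bv k)) +
      φ₂ (z * (algebraMap K₀ K δ)⁻¹ * algebraMap K₀ K (bv j) * algebraMap K₀ K (bv k))) :
    (Z.map Complex.im).PosDef ∧
    (Z.map Complex.im).det =
      Real.sqrt |((Algebra.norm ℚ ((z - conj z) / 2) : ℚ) : ℝ)| *
        ((FractionalIdeal.absNorm b : ℚ) : ℝ) ^ 2 ∧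
    2 / Real.sqrt (NumberField.discr K₀ : ℝ) * ((FractionalIdeal.absNorm b : ℚ) : ℝ) *
        Real.sqrt (Real.sqrt |((Algebra.norm ℚ ((z - conj z) / 2) : ℚ) : ℝ)|) ≤
      m1 (Z.map Complex.im) ∧
    m1 (Z.map Complex.im) ≤ m2 (Z.map Complex.im) ∧
    m2 (Z.map Complex.im) ≤
      2 * Real.sqrt (NumberField.discr K₀ : ℝ) / 3 * ((FractionalIdeal.absNorm b : ℚ) : ℝ) *
        Real.sqrt (Real.sqrt |((Algebra.norm ℚ ((z - conj z) / 2) : ℚ) : ℝ)|) :=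
  stmt_10_general K₀ K hdegK hdegK₀ hquad htotreal conj hconj δ hδ c hc b hb bv hbv_indep hbv_span
    hbasis z φ₁ φ₂ hφne hφ₁ hφ₂ Z hZ
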